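/- On the Lie algebra d₄,½ with metric h₂ (h₂(e₁,e₂) = 1, h₂(e₃,e₄) = −1), for every real x₄, the vector field X = x₄e₄ and constant λ = −x₄ satisfy the Ricci soliton equation L_X h₂ + ric = λ h₂, where L_X h(u,v) = h(∇_u X, v) + h(u, ∇_v X). -/

import Mathlib

/-- The bracket of the Lie algebra `d₄,½` on `ℝ⁴` (0-indexed):
`[e₀,e₁] = e₂`, `[e₃,e₂] = e₂`, `[e₃,e₀] = ½e₀`, `[e₃,e₁] = ½e₁`. -/
noncomputable def brD4half (u v : Fin 4 → ℝ) : Fin 4 → ℝ :=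
  ![(1/2) * (u 3 * v 0 - u 0 * v 3), (1/2) * (u 3 * v 1 - u 1 * v 3),
    u 0 * v 1 - u 1 * v 0 + (u 3 * v 2 - u 2 * v 3), 0]

/-- The metric `h₂` on `d₄,½` (0-indexed): `h₂(e₀,e₁) = 1`, `h₂(e₂,e₃) = −1`,
symmetric, other values zero. -/
def h2D4half (u v : Fin 4 → ℝ) : ℝ :=
  u 0 * v 1 + u 1 * v 0 - u 2 * v 3 - u 3 * v 2

/-- On `d₄,½` with flat metric `h₂`, for every real `x₄` the vector `X = x₄e₄` and
constant `λ = −x₄` solve the algebraic Ricci soliton equation `L_X h₂ + ric = λ h₂`,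
where `(L_X h)(u,v) = h(∇_u X, v) + h(u, ∇_v X)` and
`ric(u,v) = tr(w ↦ R(u,w)v)`. -/
theorem stmt12
    (nabla : (Fin 4 → ℝ) → (Fin 4 → ℝ) → (Fin 4 → ℝ))
    (hKoszul : ∀ u v w, 2 * h2D4half (nabla u v) w
      = h2D4half (brD4half u v) w + h2D4half (brD4half w u) v
        + h2D4half (brD4half w v) u) :
    ∀ x4 : ℝ, ∀ u v,
      (h2D4half (nabla u (x4 • (Pi.single 3 1 : Fin 4 → ℝ))) v
        + h2D4half u (nabla v (x4 • (Pi.single 3 1 : Fin 4 → ℝ))))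
      + (∑ i : Fin 4,
          (nabla (brD4half u (Pi.single i 1)) v
            - nabla u (nabla (Pi.single i 1) v)
            + nabla (Pi.single i 1) (nabla u v)) i)
      = (-x4) * h2D4half u v := by
  intro x4 u v
  have hnab : ∀ u v : Fin 4 → ℝ, nabla u v =
      ![(1/2) * (u 3 * v 0), -(u 1 * v 3) - (1/2) * (u 3 * v 1),
        -(u 1 * v 0) + u 3 * v 2, -(u 3 * v 3)] := by
    intro u v
    have h0 := hKoszul u v (Pi.single 1 1)
    have h1 := hKoszul u v (Pi.single 0 1)
    have h2 := hKoszul u v (Pi.single 3 1)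
    have h3 := hKoszul u v (Pi.single 2 1)
    simp [h2D4half, brD4half, Pi.single_apply] at h0 h1 h2 h3
    funext i
    fin_cases i
    · show nabla u v 0 = (1/2) * (u 3 * v 0); linarith
    · show nabla u v 1 = -(u 1 * v 3) - (1/2) * (u 3 * v 1); linarith
    · show nabla u v 2 = -(u 1 * v 0) + u 3 * v 2; linarith
    · show nabla u v 3 = -(u 3 * v 3); linarith
  simp only [hnab, h2D4half, brD4half, Fin.sum_univ_four, Pi.single_apply, Pi.smul_apply,
    smul_eq_mul, Matrix.cons_val_zero, Matrix.cons_val_one, Matrix.head_cons,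
    Matrix.cons_val_two, Matrix.tail_cons, Matrix.cons_val_three, Fin.isValue]
  norm_num [Fin.ext_iff, show ((3:Fin 4):ℕ) = 3 from rfl, show ((2:Fin 4):ℕ) = 2 from rfl, show ((1:Fin 4):ℕ) = 1 from rfl, show ((0:Fin 4):ℕ) = 0 from rfl]
  simp only [Matrix.cons_val]
  ring
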